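/- Let M_φ be tasks r_w(s,a)=φ(s,a)ᵀw on a common finite backbone with γ ∈ [0,1). Let π*_j be an optimal policy of task w_j, Q_i^{π*_j} its value in task w_i, Q*_i the optimal value of task w_i, and φ_max = max_{s,a}‖φ(s,a)‖₂. Then for all (s,a): Q*_i(s,a) − Q_i^{π*_j}(s,a) ≤ (2 φ_max/(1−γ)) ‖w_i − w_j‖₂. -/

import Mathlib

/-!
The rewards of the two tasks differ by at most `ε = φmax * ‖wi - wj‖` pointwise, by
Cauchy–Schwarz. Both the optimal and the fixed-policy Bellman backups are `γ`-contractions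
in the sup norm, so the optimal values of the two tasks, and the values of `π*_j` in the two
tasks, each differ by at most `ε / (1 - γ)`. Since `π*_j` attains the optimal value of task
`j`, the triangle inequality gives the loss bound `2 ε / (1 - γ)`.
-/

open Finset

theorem abs_inner_sub_inner_le {E : Type*} [NormedAddCommGroup E] [InnerProductSpace ℝ E]
    (x y z : E) : |inner ℝ x y - inner ℝ x z| ≤ ‖x‖ * ‖y - z‖ := by
  rw [← inner_sub_right]
  exact abs_real_inner_le_norm x (y - z)

theorem abs_sum_mul_le_of_forall_abs_le {S : Type*} [Fintype S] {P f : S → ℝ} {M : ℝ}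
    (hP0 : ∀ s, 0 ≤ P s) (hP1 : ∑ s, P s = 1) (hf : ∀ s, |f s| ≤ M) :
    |∑ s, P s * f s| ≤ M :=
  calc |∑ s, P s * f s| ≤ ∑ s, |P s * f s| := abs_sum_le_sum_abs _ _
    _ ≤ ∑ s, P s * M := by
        gcongr with s
        rw [abs_mul, abs_of_nonneg (hP0 s)]
        exact mul_le_mul_of_nonneg_left (hf s) (hP0 s)
    _ = M := by rw [← sum_mul, hP1, one_mul]

theorem ciSup_le_ciSup_add {ι : Type*} [Finite ι] [Nonempty ι] {f g : ι → ℝ} {M : ℝ}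
    (h : ∀ i, f i ≤ g i + M) : ⨆ i, f i ≤ (⨆ i, g i) + M :=
  ciSup_le fun i => (h i).trans <| by gcongr; exact le_ciSup (Set.finite_range g).bddAbove i

theorem abs_ciSup_sub_ciSup_le {ι : Type*} [Finite ι] [Nonempty ι] {f g : ι → ℝ} {M : ℝ}
    (h : ∀ i, |f i - g i| ≤ M) : |(⨆ i, f i) - ⨆ i, g i| ≤ M := by
  rw [abs_sub_le_iff, sub_le_iff_le_add', sub_le_iff_le_add']
  constructor
  · exact ciSup_le_ciSup_add fun i => by linarith [(abs_le.mp (h i)).2]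
  · exact ciSup_le_ciSup_add fun i => by linarith [(abs_le.mp (h i)).1]

theorem abs_le_div_one_sub_of_contraction {ι : Type*} [Finite ι] {D : ι → ℝ} {ε γ : ℝ}
    (hγ : γ < 1) (h : ∀ M, (∀ i, |D i| ≤ M) → ∀ i, |D i| ≤ ε + γ * M) (i : ι) :
    |D i| ≤ ε / (1 - γ) := by
  have : Nonempty ι := ⟨i⟩
  obtain ⟨i₀, hi₀⟩ := Finite.exists_max fun j => |D j|
  have hmax := h _ hi₀ i₀
  exact (hi₀ i).trans <| by rw [le_div_iff₀ (by linarith)]; linarith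

/-- `hV` says that the backup `Q ↦ V` is nonexpansive in the sup norm; together with the
discount this makes the Bellman operator a `γ`-contraction. -/
theorem abs_sub_le_of_bellman {ι S : Type*} [Finite ι] [Fintype S] {P : ι → S → ℝ}
    (hP0 : ∀ i s, 0 ≤ P i s) (hP1 : ∀ i, ∑ s, P i s = 1) {γ ε : ℝ} (hγ0 : 0 ≤ γ)
    (hγ1 : γ < 1) {r₁ r₂ Q₁ Q₂ : ι → ℝ} {V₁ V₂ : S → ℝ} (hr : ∀ i, |r₁ i - r₂ i| ≤ ε)
    (hV : ∀ M, (∀ i, |Q₁ i - Q₂ i| ≤ M) → ∀ s, |V₁ s - V₂ s| ≤ M)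
    (hQ₁ : ∀ i, Q₁ i = r₁ i + γ * ∑ s, P i s * V₁ s)
    (hQ₂ : ∀ i, Q₂ i = r₂ i + γ * ∑ s, P i s * V₂ s) (i : ι) :
    |Q₁ i - Q₂ i| ≤ ε / (1 - γ) := by
  refine abs_le_div_one_sub_of_contraction (D := fun i => Q₁ i - Q₂ i) hγ1
    (fun M hM i => ?_) i
  have hdecomp : Q₁ i - Q₂ i = (r₁ i - r₂ i) + γ * ∑ s, P i s * (V₁ s - V₂ s) := by
    simp only [hQ₁, hQ₂, mul_sub, sum_sub_distrib]
    ring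
  have hexp := abs_sum_mul_le_of_forall_abs_le (hP0 i) (hP1 i) (hV M hM)
  calc |Q₁ i - Q₂ i| ≤ |r₁ i - r₂ i| + |γ * ∑ s, P i s * (V₁ s - V₂ s)| :=
        hdecomp ▸ abs_add_le _ _
    _ ≤ ε + γ * M := by
        rw [abs_mul, abs_of_nonneg hγ0]
        gcongr
        exact hr i

theorem transfer_loss_weight_bound_general
    {S A : Type*} [Fintype S] [Fintype A]
    {d : ℕ}
    (p : S → A → S → ℝ)
    (hp0 : ∀ s a s', 0 ≤ p s a s') (hp1 : ∀ s a, ∑ s', p s a s' = 1)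
    (γ : ℝ) (hγ0 : 0 ≤ γ) (hγ1 : γ < 1)
    (φ : S → A → EuclideanSpace ℝ (Fin d))
    (φmax : ℝ) (hφmax : ∀ s a, ‖φ s a‖ ≤ φmax)
    (wi wj : EuclideanSpace ℝ (Fin d))
    -- Q*_i : optimal value of task wᵢ
    (Qstari : S → A → ℝ)
    (hQstari : ∀ s a, Qstari s a =
      (inner ℝ (φ s a) wi : ℝ) + γ * ∑ s', p s a s' * ⨆ b, Qstari s' b)
    -- π*_j : optimal policy of task w_j
    (πj : S → A)
    (Qstarj : S → A → ℝ)
    (hQstarj : ∀ s a, Qstarj s a =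
      (inner ℝ (φ s a) wj : ℝ) + γ * ∑ s', p s a s' * ⨆ b, Qstarj s' b)
    (hπjopt : ∀ s a, Qstarj s a =
      (inner ℝ (φ s a) wj : ℝ) + γ * ∑ s', p s a s' * Qstarj s' (πj s'))
    -- Q_i^{π*_j} : value of π*_j in task wᵢ
    (Qij : S → A → ℝ)
    (hQij : ∀ s a, Qij s a =
      (inner ℝ (φ s a) wi : ℝ) + γ * ∑ s', p s a s' * Qij s' (πj s')) :
    ∀ s a, Qstari s a - Qij s a ≤ 2 * φmax / (1 - γ) * ‖wi - wj‖ := by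
  intro s a
  have : Nonempty A := ⟨a⟩
  have hreward : ∀ x : S × A,
      |inner ℝ (φ x.1 x.2) wi - inner ℝ (φ x.1 x.2) wj| ≤ φmax * ‖wi - wj‖ := fun x =>
    (abs_inner_sub_inner_le _ _ _).trans <| by gcongr; exact hφmax x.1 x.2
  have hoptimal : |Qstari s a - Qstarj s a| ≤ φmax * ‖wi - wj‖ / (1 - γ) :=
    abs_sub_le_of_bellman (ι := S × A) (fun x => hp0 x.1 x.2) (fun x => hp1 x.1 x.2) hγ0 hγ1
      hreward (fun _ hM s' => abs_ciSup_sub_ciSup_le fun b => hM (s', b))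
      (fun x => hQstari x.1 x.2) (fun x => hQstarj x.1 x.2) (s, a)
  have hpolicy : |Qij s a - Qstarj s a| ≤ φmax * ‖wi - wj‖ / (1 - γ) :=
    abs_sub_le_of_bellman (ι := S × A) (fun x => hp0 x.1 x.2) (fun x => hp1 x.1 x.2) hγ0 hγ1
      hreward (fun _ hM s' => hM (s', πj s'))
      (fun x => hQij x.1 x.2) (fun x => hπjopt x.1 x.2) (s, a)
  calc Qstari s a - Qij s a = (Qstari s a - Qstarj s a) - (Qij s a - Qstarj s a) := by ring
    _ ≤ φmax * ‖wi - wj‖ / (1 - γ) + φmax * ‖wi - wj‖ / (1 - γ) :=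
        by linarith [(abs_le.mp hoptimal).2, (abs_le.mp hpolicy).1]
    _ = 2 * φmax / (1 - γ) * ‖wi - wj‖ := by ring

/-- Lemma 1 + Cauchy–Schwarz: the loss of reusing task j's optimal policy in
task i is at most (2 φ_max/(1−γ)) ‖wᵢ − w_j‖₂. -/
theorem transfer_loss_weight_bound
    {S A : Type*} [Fintype S] [Fintype A] [Nonempty S] [Nonempty A]
    {d : ℕ}
    (p : S → A → S → ℝ)
    (hp0 : ∀ s a s', 0 ≤ p s a s') (hp1 : ∀ s a, ∑ s', p s a s' = 1)
    (γ : ℝ) (hγ0 : 0 ≤ γ) (hγ1 : γ < 1)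
    (φ : S → A → EuclideanSpace ℝ (Fin d))
    (φmax : ℝ) (hφmax : ∀ s a, ‖φ s a‖ ≤ φmax)
    (wi wj : EuclideanSpace ℝ (Fin d))
    -- Q*_i : optimal value of task wᵢ
    (Qstari : S → A → ℝ)
    (hQstari : ∀ s a, Qstari s a =
      (inner ℝ (φ s a) wi : ℝ) + γ * ∑ s', p s a s' * ⨆ b, Qstari s' b)
    -- π*_j : optimal policy of task w_j
    (πj : S → A)
    (Qstarj : S → A → ℝ)
    (hQstarj : ∀ s a, Qstarj s a =
      (inner ℝ (φ s a) wj : ℝ) + γ * ∑ s', p s a s' * ⨆ b, Qstarj s' b)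
    (hπjopt : ∀ s a, Qstarj s a =
      (inner ℝ (φ s a) wj : ℝ) + γ * ∑ s', p s a s' * Qstarj s' (πj s'))
    -- Q_i^{π*_j} : value of π*_j in task wᵢ
    (Qij : S → A → ℝ)
    (hQij : ∀ s a, Qij s a =
      (inner ℝ (φ s a) wi : ℝ) + γ * ∑ s', p s a s' * Qij s' (πj s')) :
    ∀ s a, Qstari s a - Qij s a ≤ 2 * φmax / (1 - γ) * ‖wi - wj‖ :=
  transfer_loss_weight_bound_general p hp0 hp1 γ hγ0 hγ1 φ φmax hφmax wi wj Qstari hQstari πj Qstarj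
    hQstarj hπjopt Qij hQij
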